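/- arXiv:1908.00972 — 3 statements merged into one kernel-verified Lean document; each statement's English description precedes it below -/
import Mathlib

section
/- Let n ≥ 1, let z ∈ ℂ \ {0}, and let β, γ : [0,1] → ℂ \ {0} be two loops based at z (β(0) = β(1) = γ(0) = γ(1) = z). Let δ be the commutator loop β·γ·β⁻¹·γ⁻¹ obtained by concatenating β, then γ, then β reversed, then γ reversed. Then every continuous lift ω of δ under the n-th power map (ω(t)^n = δ(t) for all t) is a closed loop: ω(1) = ω(0). -/
/-!
Two continuous `n`-th roots of the same nowhere-vanishing function on a connected space differ
by a constant factor, since their ratio takes values in the finite set of `n`-th roots of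
unity. Hence the lift `ω` of `δ`, cut into the four pieces lifting `β`, `γ`, `β⁻¹`, `γ⁻¹`,
multiplies along `β⁻¹` by the inverse of the factor it picked up along `β`, and likewise for `γ`;
the four factors cancel and `ω 1 = ω 0`.
-/

open unitInterval

theorem Set.finite_setOf_pow_eq_one {K : Type*} [Field K] {n : ℕ} (hn : n ≠ 0) :
    {w : K | w ^ n = 1}.Finite :=
  (Polynomial.nthRoots n (1 : K)).finite_toSet.subset fun w hw => by
    simpa [Polynomial.mem_nthRoots (Nat.pos_of_ne_zero hn)] using hw

theorem mul_eq_mul_of_pow_eq_of_pow_eq {K X : Type*} [Field K] [TopologicalSpace K]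
    [ContinuousMul K] [ContinuousInv₀ K] [T1Space K] [TopologicalSpace X]
    [PreconnectedSpace X] {n : ℕ} (hn : n ≠ 0) {p f g : X → K}
    (hf : Continuous f) (hg : Continuous g) (hfp : ∀ x, f x ^ n = p x)
    (hgp : ∀ x, g x ^ n = p x) (hp : ∀ x, p x ≠ 0) (x y : X) :
    f x * g y = f y * g x := by
  have hg0 : ∀ x, g x ≠ 0 := fun x h => hp x (by rw [← hgp, h, zero_pow hn])
  have hratio : f x / g x = f y / g y :=
    isPreconnected_univ.constant_of_mapsTo (Set.finite_setOf_pow_eq_one hn).isDiscrete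
      (hf.div hg hg0).continuousOn (fun x _ => by simp [div_pow, hfp, hgp, hp x])
      (Set.mem_univ x) (Set.mem_univ y)
  rw [div_eq_div_iff (hg0 x) (hg0 y)] at hratio
  linear_combination hratio

namespace unitInterval

noncomputable def firstHalf (t : I) : I := ⟨t / 2, by constructor <;> linarith [t.2.1, t.2.2]⟩

noncomputable def secondHalf (t : I) : I :=
  ⟨(1 + t) / 2, by constructor <;> linarith [t.2.1, t.2.2]⟩

@[fun_prop]
theorem continuous_firstHalf : Continuous firstHalf := by
  unfold firstHalf; fun_prop

@[fun_prop]
theorem continuous_secondHalf : Continuous secondHalf := by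
  unfold secondHalf; fun_prop

@[simp]
theorem firstHalf_zero : firstHalf 0 = 0 := by ext; simp [firstHalf]

@[simp]
theorem firstHalf_one : firstHalf 1 = secondHalf 0 := by ext; simp [firstHalf, secondHalf]

@[simp]
theorem secondHalf_one : secondHalf 1 = 1 := by ext; norm_num [secondHalf]

end unitInterval

namespace Path

variable {X : Type*} [TopologicalSpace X] {x y z : X}

@[simp]
theorem trans_apply_firstHalf (γ : Path x y) (γ' : Path y z) (t : I) :
    γ.trans γ' (firstHalf t) = γ t := by
  rw [← extend_extends', extend_trans_of_le_half _ _ (by simp [firstHalf]; linarith [t.2.2]),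
    show 2 * ((firstHalf t : I) : ℝ) = t by simp [firstHalf]; ring, extend_extends']

@[simp]
theorem trans_apply_secondHalf (γ : Path x y) (γ' : Path y z) (t : I) :
    γ.trans γ' (secondHalf t) = γ' t := by
  rw [← extend_extends', extend_trans_of_half_le _ _ (by simp [secondHalf]; linarith [t.2.1]),
    show 2 * ((secondHalf t : I) : ℝ) - 1 = t by simp [secondHalf]; ring, extend_extends']

end Path

theorem nth_root_lift_of_commutator_loop_is_closed (n : ℕ) (hn : 1 ≤ n)
    (z : {z : ℂ // z ≠ 0}) (β γ : Path z z)
    (δ : Path z z) (hδ : δ = ((β.trans γ).trans β.symm).trans γ.symm)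
    (ω : unitInterval → ℂ) (hω : Continuous ω)
    (hlift : ∀ t, ω t ^ n = (δ t : ℂ)) :
    ω 1 = ω 0 := by
  subst hδ
  set ωβ := fun t => ω (firstHalf (firstHalf (firstHalf t)))
  set ωγ := fun t => ω (firstHalf (firstHalf (secondHalf t)))
  set ωβr := fun t => ω (firstHalf (secondHalf t))
  set ωγr := fun t => ω (secondHalf t)
  have hn0 : n ≠ 0 := by omega
  have hβ : ωβ 0 * ωβr 0 = ωβ 1 * ωβr 1 := by
    simpa using mul_eq_mul_of_pow_eq_of_pow_eq hn0 (p := fun t => (β t : ℂ))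
      (g := fun t => ωβr (σ t)) (by fun_prop) (by fun_prop) (fun t => by simp [ωβ, hlift])
      (fun t => by simp [ωβr, hlift]) (fun t => (β t).2) 0 1
  have hγ : ωγ 0 * ωγr 0 = ωγ 1 * ωγr 1 := by
    simpa using mul_eq_mul_of_pow_eq_of_pow_eq hn0 (p := fun t => (γ t : ℂ))
      (g := fun t => ωγr (σ t)) (by fun_prop) (by fun_prop) (fun t => by simp [ωγ, hlift])
      (fun t => by simp [ωγr, hlift]) (fun t => (γ t).2) 0 1
  have hωγ1 : ωγ 1 ≠ 0 := (pow_ne_zero_iff hn0).mp (by simpa [ωγ, hlift] using z.2)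
  apply mul_left_cancel₀ hωγ1
  calc ωγ 1 * ω 1 = ωγ 1 * ωγr 1 := by simp [ωγr]
    _ = ωγ 0 * ωγr 0 := hγ.symm
    _ = ωβ 1 * ωβr 1 := by simp [ωβ, ωγ, ωβr, ωγr]
    _ = ωβ 0 * ωβr 0 := hβ.symm
    _ = ωγ 1 * ω 0 := by simp [ωβ, ωγ, ωβr, mul_comm]
end

section
/- There do not exist continuous functions f, g : ℂ × ℂ → ℂ such that for all (a₀, a₁) ∈ ℂ × ℂ, the values f(a₀,a₁) and g(a₀,a₁) are the two roots of the monic quadratic z² + a₁ z + a₀, i.e., such that f(a₀,a₁) + g(a₀,a₁) = −a₁ and f(a₀,a₁) · g(a₀,a₁) = a₀ for all a₀, a₁ ∈ ℂ. -/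
theorem Circle.not_exists_continuous_sqrt :
    ¬ ∃ s : Circle → ℂ, Continuous s ∧ ∀ z, s z ^ 2 = z := by
  rintro ⟨s, hs, hsq⟩
  -- Along `t ↦ exp (t i)`, both `s (exp (t i) ^ 2)` and `exp (t i)` are square roots of
  -- `exp (2 t i)`; over the connected line they agree up to a global sign, which fails at `t = π`.
  have hsign := isPreconnected_univ.eq_or_eq_neg_of_sq_eq
    (f := fun t : ℝ ↦ s (Circle.exp t ^ 2)) (g := fun t ↦ (Circle.exp t : ℂ))
    (by fun_prop) (by fun_prop)
    (fun _ _ ↦ by simp only [Pi.pow_apply, hsq, Circle.coe_pow])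
    (fun _ ↦ Circle.coe_ne_zero _)
  have hπ : (Circle.exp Real.pi : ℂ) = -1 := by simp [Circle.coe_exp, Complex.exp_pi_mul_I]
  have hπsq : Circle.exp Real.pi ^ 2 = 1 := by ext; simp [hπ]
  rcases hsign with h | h <;>
  · have at0 := h (Set.mem_univ 0)
    have atπ := h (Set.mem_univ Real.pi)
    simp only [Circle.exp_zero, one_pow, Circle.coe_one, hπsq, hπ, Pi.neg_apply] at at0 atπ
    norm_num [at0] at atπ

theorem no_continuous_pair_of_quadratic_roots :
    ¬ ∃ f g : ℂ × ℂ → ℂ, Continuous f ∧ Continuous g ∧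
      ∀ a₀ a₁ : ℂ, f (a₀, a₁) + g (a₀, a₁) = -a₁ ∧ f (a₀, a₁) * g (a₀, a₁) = a₀ := by
  rintro ⟨f, g, hf, -, hvieta⟩
  -- For `a₁ = 0` the two roots are `±f (a₀, 0)`, so `z ↦ f (-z, 0)` is a continuous square root.
  have hsq (a₀ : ℂ) : f (a₀, 0) ^ 2 = -a₀ := by
    obtain ⟨hsum, hprod⟩ := hvieta a₀ 0
    linear_combination f (a₀, 0) * hsum - hprod
  refine Circle.not_exists_continuous_sqrt ⟨fun z ↦ f (-z, 0), ?_, fun z ↦ by simp [hsq]⟩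
  fun_prop
end

section
/- For every natural number n ≥ 2, there does not exist a continuous function f : ℂⁿ → ℂ such that for all a = (a₀, a₁, …, a_{n−1}) ∈ ℂⁿ, f(a)ⁿ + a_{n−1} f(a)^{n−1} + ⋯ + a₁ f(a) + a₀ = 0; i.e., there is no continuous single-valued choice of a root of the general monic degree-n polynomial as a function of its coefficients. -/
/-!
Specialising the coefficients to `(-c, 0, …, 0)` turns a continuous root of the general monic
polynomial into a continuous `n`-th root `g` of `c`. Then `g (z ^ n) / z` is a continuous map from
the connected set `ℂ ∖ {0}` to the finite set of `n`-th roots of unity, hence constant; comparing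
its values at `1` and at a primitive `n`-th root of unity `ζ` forces `ζ = 1`.
-/

open Polynomial Set

theorem Complex.isPreconnected_compl_singleton (z : ℂ) : IsPreconnected ({z}ᶜ : Set ℂ) :=
  (isConnected_compl_singleton_of_one_lt_rank (by simp) z).isPreconnected

theorem Complex.not_continuousOn_of_pow_eq {n : ℕ} (hn : 2 ≤ n) {g : ℂ → ℂ}
    (hg : ∀ c ≠ 0, g c ^ n = c) : ¬ContinuousOn g {0}ᶜ := by
  intro hcont
  have hn0 : 0 < n := by omega
  have hroot : MapsTo (fun z => g (z ^ n) / z) {0}ᶜ (nthRootsFinset n (1 : ℂ)) := by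
    intro z hz
    have hzn : z ^ n ≠ 0 := pow_ne_zero n hz
    rw [Finset.mem_coe, mem_nthRootsFinset hn0, div_pow, hg _ hzn, div_self hzn]
  have hcont' : ContinuousOn (fun z => g (z ^ n) / z) {0}ᶜ :=
    (hcont.comp (continuousOn_pow n) fun z hz => pow_ne_zero n hz).div continuousOn_id
      fun z hz => hz
  obtain ⟨ζ, hζ⟩ : ∃ ζ : ℂ, IsPrimitiveRoot ζ n := ⟨_, Complex.isPrimitiveRoot_exp n hn0.ne'⟩
  have hζ0 : ζ ≠ 0 := hζ.ne_zero hn0.ne'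
  have hconst : g (1 ^ n) / 1 = g (ζ ^ n) / ζ :=
    (isPreconnected_compl_singleton 0).constant_of_mapsTo (Finset.finite_toSet _).isDiscrete
      hcont' hroot one_ne_zero hζ0
  have hg1 : g 1 ≠ 0 := fun h => by simpa [h, hn0.ne'] using hg 1 one_ne_zero
  rw [one_pow, div_one, hζ.pow_eq_one, eq_div_iff hζ0] at hconst
  exact hζ.ne_one (by omega) ((mul_eq_left₀ hg1).mp hconst)

theorem no_continuous_root_of_general_monic (n : ℕ) (hn : 2 ≤ n) :
    ¬ ∃ f : (Fin n → ℂ) → ℂ, Continuous f ∧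
      ∀ a : Fin n → ℂ, f a ^ n + ∑ i : Fin n, a i * f a ^ (i : ℕ) = 0 := by
  rintro ⟨f, hf, hroot⟩
  let i₀ : Fin n := ⟨0, by omega⟩
  have hpow (c : ℂ) : f (Pi.single i₀ (-c)) ^ n = c := by
    have := hroot (Pi.single i₀ (-c))
    simp only [Pi.single_apply, ite_mul, zero_mul, Finset.sum_ite_eq', Finset.mem_univ,
      if_true, i₀, pow_zero, mul_one] at this
    linear_combination this
  have hcont : Continuous fun c : ℂ => f (Pi.single i₀ (-c)) :=
    hf.comp ((continuous_single i₀).comp continuous_neg)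
  exact Complex.not_continuousOn_of_pow_eq hn (fun c _ => hpow c) hcont.continuousOn
end
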